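/- Let H be the binary entropy function in bits. Then the function f(a) = 2·H(a)/(3+a) attains on [0,1] a maximum value strictly greater than 0.57 and strictly less than 0.58. -/

import Mathlib

open Real

/-- Binary entropy in bits. -/
noncomputable def binEnt (p : ℝ) : ℝ :=
  -(p * Real.logb 2 p) - ((1 - p) * Real.logb 2 (1 - p))

lemma binEnt_eq (p : ℝ) : binEnt p = Real.binEntropy p / Real.log 2 := by
  simp only [binEnt, Real.binEntropy, Real.logb, Real.log_inv]
  ring

lemma binEnt_half : binEnt (1/2) = 1 := by
  have h2 : Real.log 2 ≠ 0 := ne_of_gt (Real.log_pos (by norm_num))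
  rw [binEnt_eq]
  norm_num [Real.binEntropy, Real.log_inv]
  field_simp
  norm_num

-- tangent line bound at 9/20
lemma tangent_bound {b : ℝ} (hb : b ∈ Set.Icc (0:ℝ) 1) :
    Real.binEntropy b ≤ Real.binEntropy (9/20)
      + (Real.log (11/20) - Real.log (9/20)) * (b - 9/20) := by
  set d := Real.log (11/20) - Real.log (9/20) with hd
  have hder : HasDerivAt Real.binEntropy d (9/20) := by
    have := Real.hasDerivAt_binEntropy (p := 9/20) (by norm_num) (by norm_num)
    norm_num at this ⊢
    exact this
  have hconc : ConcaveOn ℝ (Set.Icc (0:ℝ) 1) Real.binEntropy :=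
    Real.strictConcave_binEntropy.concaveOn
  have hx : (9/20 : ℝ) ∈ Set.Icc (0:ℝ) 1 := by norm_num
  rcases lt_trichotomy b (9/20 : ℝ) with h | h | h
  · have hs := hconc.le_slope_of_hasDerivAt hb hx h hder
    rw [slope_def_field] at hs
    have h' : (0:ℝ) < 9/20 - b := by linarith
    rw [le_div_iff₀ h'] at hs
    nlinarith
  · simp [h]
  · have hs := hconc.slope_le_of_hasDerivAt hx hb h hder
    rw [slope_def_field] at hs
    have h' : (0:ℝ) < b - 9/20 := by linarith
    rw [div_le_iff₀ h'] at hs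
    nlinarith

lemma upper_bound {b : ℝ} (hb : b ∈ Set.Icc (0:ℝ) 1) :
    2 * binEnt b / (3 + b) < 0.58 := by
  obtain ⟨hb0, hb1⟩ := hb
  have hl2 : (0:ℝ) < Real.log 2 := Real.log_pos (by norm_num)
  have h3b : (0:ℝ) < 3 + b := by linarith
  -- key log facts
  have hlog1 : Real.log (11/20) - Real.log (9/20) = Real.log 11 - Real.log 9 := by
    rw [Real.log_div (by norm_num) (by norm_num), Real.log_div (by norm_num) (by norm_num)]
    ring
  have F1 : 100 * (Real.log 11 - Real.log 9) < 29 * Real.log 2 := by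
    have h : (11:ℝ)^100 < 2^29 * 9^100 := by norm_num
    have := Real.log_lt_log (by positivity) h
    rw [Real.log_mul (by positivity) (by positivity), Real.log_pow, Real.log_pow,
      Real.log_pow] at this
    push_cast at this
    linarith
  have F2 : 100 * Real.log 20 < 87 * Real.log 2 + 100 * Real.log 11 := by
    have h : (20:ℝ)^100 < 2^87 * 11^100 := by norm_num
    have := Real.log_lt_log (by positivity) h
    rw [Real.log_mul (by positivity) (by positivity), Real.log_pow, Real.log_pow,
      Real.log_pow] at this
    push_cast at this
    linarith
  have hE : Real.binEntropy (9/20)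
      = (9/20) * (Real.log 20 - Real.log 9) + (11/20) * (Real.log 20 - Real.log 11) := by
    rw [Real.binEntropy]
    norm_num
    rw [Real.log_div (by norm_num) (by norm_num), Real.log_div (by norm_num) (by norm_num)]
  have htan := tangent_bound ⟨hb0, hb1⟩
  rw [hlog1, hE] at htan
  set l2 := Real.log 2
  set l9 := Real.log 9
  set l11 := Real.log 11
  set l20 := Real.log 20
  -- multiply tangent slope bound by b ≥ 0
  have hmul : (Real.log 11 - Real.log 9) * b ≤ (29/100) * Real.log 2 * b := by
    apply mul_le_mul_of_nonneg_right _ hb0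
    linarith
  rw [binEnt_eq, div_lt_iff₀ h3b, ← mul_div_assoc, div_lt_iff₀ hl2]
  linarith [htan, hmul, F2]

theorem ising_capacity_max_bounds :
    ∃ a ∈ Set.Ioo (0 : ℝ) 1,
      (∀ b ∈ Set.Icc (0 : ℝ) 1,
        2 * binEnt b / (3 + b) ≤ 2 * binEnt a / (3 + a)) ∧
      0.57 < 2 * binEnt a / (3 + a) ∧
      2 * binEnt a / (3 + a) < 0.58 := by
  have hcont : ContinuousOn (fun b : ℝ => 2 * binEnt b / (3 + b)) (Set.Icc 0 1) := by
    apply ContinuousOn.div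
    · apply Continuous.continuousOn
      have : Continuous binEnt := by
        have : binEnt = fun p => Real.binEntropy p / Real.log 2 := funext binEnt_eq
        rw [this]
        exact Real.binEntropy_continuous.div_const _
      fun_prop
    · fun_prop
    · intro x hx
      have := hx.1
      intro h; linarith [h]
  obtain ⟨a, haI, hmax⟩ := (isCompact_Icc (a := (0:ℝ)) (b := 1)).exists_isMaxOn
    (Set.nonempty_Icc.2 (by norm_num)) hcont
  have hmax' : ∀ b ∈ Set.Icc (0:ℝ) 1, 2 * binEnt b / (3 + b) ≤ 2 * binEnt a / (3 + a) :=
    fun b hb => hmax hb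
  have hhalf : (4:ℝ)/7 ≤ 2 * binEnt a / (3 + a) := by
    have h := hmax' (1/2) (by norm_num)
    rw [binEnt_half] at h
    calc (4:ℝ)/7 = 2*1/(3+1/2) := by norm_num
    _ ≤ _ := h
  have hlow : (0.57 : ℝ) < 2 * binEnt a / (3 + a) := by
    calc (0.57:ℝ) < 4/7 := by norm_num
    _ ≤ _ := hhalf
  have h3a : (0:ℝ) < 3 + a := by linarith [haI.1]
  have hapos : 0 < binEnt a := by
    by_contra h
    push_neg at h
    have : 2 * binEnt a / (3 + a) ≤ 0 := by
      apply div_nonpos_of_nonpos_of_nonneg (by linarith) (by linarith)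
    linarith
  refine ⟨a, ⟨?_, ?_⟩, hmax', hlow, upper_bound haI⟩
  · rcases lt_or_eq_of_le haI.1 with h | h
    · exact h
    · exfalso; rw [← h] at hapos; simp [binEnt] at hapos
  · rcases lt_or_eq_of_le haI.2 with h | h
    · exact h
    · exfalso; rw [h] at hapos; simp [binEnt] at hapos
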